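/- (Lemma B.2) Assume each ℓ_i is G_i-Lipschitz and convex. For any epoch k of shuffled SGD and any fixed v ∈ ℝⁿ, 𝒯₂ := (η_k/n)∑_{i=1}^m (v_k^{(i)} − y_k^{(i)})^⊤A_k^{(i)}(x_k − x_{k−1,i}) satisfies 𝒯₂ ≤ (η_k²√(Ĝ_{π^{(k)}}G̃_{π^{(k)}})/b)·‖y_k‖²_{Γ_k^{-1}} + (η_k²√(Ĝ_{π^{(k)}}G̃_{π^{(k)}})/(4b))·‖v_k − y_k‖²_{Γ_k^{-1}}. -/

import Mathlib

open Finset Matrix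

namespace SSGD

/-- squared Euclidean norm of a finite vector -/
noncomputable def sq {ι : Type*} [Fintype ι] (x : ι → ℝ) : ℝ := ∑ i, (x i) ^ 2

/-- Euclidean dot product -/
noncomputable def dot {ι : Type*} [Fintype ι] (x y : ι → ℝ) : ℝ := ∑ i, x i * y i

/-- weighted squared norm `‖u‖²_{(diag w)⁻¹} = ∑ i, (u i)² / w i` -/
noncomputable def wsq {ι : Type*} [Fintype ι] (w u : ι → ℝ) : ℝ := ∑ i, (u i) ^ 2 / w i

/-- operator (spectral) norm of a real matrix -/
noncomputable def opNorm {α β : Type*} [Fintype α] [Fintype β] [DecidableEq β]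
    (M : Matrix α β ℝ) : ℝ :=
  ‖LinearMap.toContinuousLinearMap (Matrix.toEuclideanLin M)‖

/-- `0`-based global index of the `j`-th element of the `i`-th batch of size `b` -/
def idx (b m : ℕ) (i : Fin m) (j : Fin b) : Fin (b * m) :=
  ⟨b * i.1 + j.1, by
    have hi : i.1 + 1 ≤ m := i.2
    have hj : j.1 < b := j.2
    calc b * i.1 + j.1 < b * i.1 + b := by omega
      _ = b * (i.1 + 1) := by ring
      _ ≤ b * m := Nat.mul_le_mul (le_refl b) hi⟩

/-- `I_{j↑}` : the identity matrix with its first `j` diagonal entries zeroed out -/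
noncomputable def Iup (n j : ℕ) : Matrix (Fin n) (Fin n) ℝ :=
  Matrix.diagonal fun i => if j ≤ i.1 then 1 else 0

/-- `I_{(j)}` (`j` 0-based) : diagonal matrix with ones exactly in positions
`b*j, …, b*(j+1)-1` -/
noncomputable def Iblk (n b j : ℕ) : Matrix (Fin n) (Fin n) ℝ :=
  Matrix.diagonal fun i => if b * j ≤ i.1 ∧ i.1 < b * (j + 1) then 1 else 0

variable {d b m : ℕ}

/-- the row-permuted data matrix `A_π` (row `i` of `A_π` is row `π i` of `A`) -/
def permMat (A : Matrix (Fin (b * m)) (Fin d) ℝ) (π : Equiv.Perm (Fin (b * m))) :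
    Matrix (Fin (b * m)) (Fin d) ℝ :=
  A.submatrix π id

/-- `Ĉ_π = (1/(m·n)) ‖W_π^{1/2} (∑_{j=1}^m I_{b(j-1)↑} A_π A_πᵀ I_{b(j-1)↑}) W_π^{1/2}‖₂`;
this is `L̂_π` for `w = L` and `Ĝ_π` for `w = G²`. -/
noncomputable def hatC (A : Matrix (Fin (b * m)) (Fin d) ℝ) (w : Fin (b * m) → ℝ)
    (π : Equiv.Perm (Fin (b * m))) : ℝ :=
  (1 / ((m : ℝ) * ((b * m : ℕ) : ℝ))) * opNorm
    (Matrix.diagonal (fun i => Real.sqrt (w (π i))) *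
      (∑ j : Fin m,
        Iup (b * m) (b * j.1) * (permMat A π * (permMat A π)ᵀ) * Iup (b * m) (b * j.1)) *
      Matrix.diagonal (fun i => Real.sqrt (w (π i))))

/-- `C̃_π = (1/b) ‖W_π^{1/2} (∑_{j=1}^m I_{(j)} A_π A_πᵀ I_{(j)}) W_π^{1/2}‖₂`;
this is `L̃_π` for `w = L` and `G̃_π` for `w = G²`. -/
noncomputable def tilC (A : Matrix (Fin (b * m)) (Fin d) ℝ) (w : Fin (b * m) → ℝ)
    (π : Equiv.Perm (Fin (b * m))) : ℝ :=
  (1 / (b : ℝ)) * opNorm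
    (Matrix.diagonal (fun i => Real.sqrt (w (π i))) *
      (∑ j : Fin m,
        Iblk (b * m) b j.1 * (permMat A π * (permMat A π)ᵀ) * Iblk (b * m) b j.1) *
      Matrix.diagonal (fun i => Real.sqrt (w (π i))))

/-- one inner (mini-batch) step of shuffled SGD, using the (sub)gradient selection `g` -/
noncomputable def step (A : Matrix (Fin (b * m)) (Fin d) ℝ) (g : Fin (b * m) → ℝ → ℝ)
    (η : ℝ) (π : Equiv.Perm (Fin (b * m))) (i : Fin m) (x : Fin d → ℝ) : Fin d → ℝ :=
  fun t => x t - (η / (b : ℝ)) *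
    ∑ j : Fin b, g (π (idx b m i j)) (dot (A (π (idx b m i j))) x) * A (π (idx b m i j)) t

/-- the primal iterates `x_{k-1,1}, …, x_{k-1,m+1}` within a single epoch
(`inIter A g η π x0 i` is `x_{k-1,i+1}`, so `inIter … 0 = x_{k-1}` and
`inIter … m = x_k`) -/
noncomputable def inIter (A : Matrix (Fin (b * m)) (Fin d) ℝ) (g : Fin (b * m) → ℝ → ℝ)
    (η : ℝ) (π : Equiv.Perm (Fin (b * m))) (x0 : Fin d → ℝ) : ℕ → Fin d → ℝ
  | 0 => x0
  | i + 1 =>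
    if h : i < m then step A g η π ⟨i, h⟩ (inIter A g η π x0 i) else inIter A g η π x0 i

/-- the dual vector `y_k` of one epoch, in permuted coordinates: its `p`-th entry is
`g_{π(p)}(a_{π(p)}ᵀ x_{k-1,i})` where `i` is the batch containing position `p` -/
noncomputable def dualY (A : Matrix (Fin (b * m)) (Fin d) ℝ) (g : Fin (b * m) → ℝ → ℝ)
    (η : ℝ) (π : Equiv.Perm (Fin (b * m))) (x0 : Fin d → ℝ) : Fin (b * m) → ℝ :=
  fun p => g (π p) (dot (A (π p)) (inIter A g η π x0 (p.1 / b)))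

/-- multi-epoch shuffled SGD: `xSeq A g η πs x0 k` is the iterate after `k` full epochs;
the (0-based) epoch `k` uses the permutation `πs k` and the step size `η k`. -/
noncomputable def xSeq (A : Matrix (Fin (b * m)) (Fin d) ℝ) (g : Fin (b * m) → ℝ → ℝ)
    (η : ℕ → ℝ) (πs : ℕ → Equiv.Perm (Fin (b * m))) (x0 : Fin d → ℝ) : ℕ → Fin d → ℝ
  | 0 => x0
  | k + 1 => inIter A g (η k) (πs k) (xSeq A g η πs x0 k) m

/-- the convex (Fenchel) conjugate of `f : ℝ → ℝ` -/
noncomputable def fconj (f : ℝ → ℝ) (y : ℝ) : ℝ := sSup (Set.range fun t => y * t - f t)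

/-- the Lagrangian `𝓛(x,y) = (1/n) ⟨A x, y⟩ - (1/n) ∑ᵢ ℓᵢ*(yⁱ)` -/
noncomputable def Lagr (A : Matrix (Fin (b * m)) (Fin d) ℝ) (ℓ : Fin (b * m) → ℝ → ℝ)
    (x : Fin d → ℝ) (y : Fin (b * m) → ℝ) : ℝ :=
  (1 / ((b * m : ℕ) : ℝ)) * ∑ i, dot (A i) x * y i
    - (1 / ((b * m : ℕ) : ℝ)) * ∑ i, fconj (ℓ i) (y i)

/-- `g` is a (global) subgradient of `f` at `t` -/
def IsSubgrad (f : ℝ → ℝ) (t g : ℝ) : Prop := ∀ s, f t + g * (s - t) ≤ f s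

/-- expectation with respect to the uniform distribution on a finite type -/
noncomputable def Eunif {α : Type*} [Fintype α] (F : α → ℝ) : ℝ :=
  (∑ a : α, F a) / (Fintype.card α : ℝ)

/-- extend a `K`-tuple of permutations to an `ℕ`-indexed sequence (by the identity) -/
def extSeq {K n : ℕ} (g : Fin K → Equiv.Perm (Fin n)) : ℕ → Equiv.Perm (Fin n) :=
  fun k => if h : k < K then g ⟨k, h⟩ else 1

/-!
Unrolling the epoch gives `x_k - x_{k-1,i} = -(η/b) A_πᵀ I_{b(i-1)↑} y`, so
`𝒯₂ = -(η²/(nb)) uᵀ M y` with `u = v_k - y_k` and `M = ∑ⱼ I_{(j)} A_π A_πᵀ I_{b(j-1)↑}`.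
With `Eⱼ = Γ^{1/2} I_{(j)} A_π` and `Fⱼ = Γ^{1/2} I_{b(j-1)↑} A_π` we have
`Γ^{1/2} M Γ^{1/2} = ∑ⱼ Eⱼ Fⱼᵀ = [E₁ ⋯ Eₘ] [F₁ ⋯ Fₘ]ᵀ`, whose spectral norm is at most
`√(‖∑ⱼ Eⱼ Eⱼᵀ‖ ‖∑ⱼ Fⱼ Fⱼᵀ‖) = n √(Ĝ G̃)`. Cauchy–Schwarz in the `Γ⁻¹`-norm and
`ab ≤ a² + b²/4` finish the proof.
-/

section L2OpNorm

open scoped Matrix.Norms.L2Operator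

variable {α β ι : Type*} [Fintype α] [Fintype β] [Fintype ι]

lemma opNorm_eq_l2_opNorm [DecidableEq β] (M : Matrix α β ℝ) : opNorm M = ‖M‖ := rfl

lemma opNorm_nonneg [DecidableEq β] (M : Matrix α β ℝ) : 0 ≤ opNorm M := norm_nonneg M

lemma opNorm_transpose [DecidableEq α] [DecidableEq β] (M : Matrix α β ℝ) :
    opNorm Mᵀ = opNorm M := by
  simpa [opNorm_eq_l2_opNorm, conjTranspose_eq_transpose_of_trivial] using
    l2_opNorm_conjTranspose M

lemma opNorm_mul_transpose_self [DecidableEq α] [DecidableEq β] (M : Matrix α β ℝ) :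
    opNorm (M * Mᵀ) = opNorm M ^ 2 := by
  have h := l2_opNorm_conjTranspose_mul_self Mᵀ
  rw [conjTranspose_eq_transpose_of_trivial, transpose_transpose] at h
  rw [opNorm_eq_l2_opNorm, h, ← opNorm_eq_l2_opNorm, opNorm_transpose, pow_two]

lemma norm_toLp_eq_sqrt_sq (x : α → ℝ) : ‖WithLp.toLp 2 x‖ = √(SSGD.sq x) := by
  rw [EuclideanSpace.norm_eq, SSGD.sq]
  simp

lemma abs_dotProduct_mulVec_le [DecidableEq β] (M : Matrix α β ℝ) (x : α → ℝ) (y : β → ℝ) :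
    |x ⬝ᵥ (M *ᵥ y)| ≤ opNorm M * (√(SSGD.sq x) * √(SSGD.sq y)) := by
  have hinner : x ⬝ᵥ (M *ᵥ y) = inner ℝ (WithLp.toLp 2 x) (WithLp.toLp 2 (M *ᵥ y)) := by
    simp [PiLp.inner_apply, dotProduct, mul_comm]
  rw [hinner, ← norm_toLp_eq_sqrt_sq, ← norm_toLp_eq_sqrt_sq]
  calc _ ≤ ‖WithLp.toLp 2 x‖ * ‖WithLp.toLp 2 (M *ᵥ y)‖ := abs_real_inner_le_norm _ _
    _ ≤ ‖WithLp.toLp 2 x‖ * (opNorm M * ‖WithLp.toLp 2 y‖) := by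
      gcongr
      exact l2_opNorm_mulVec M (WithLp.toLp 2 y)
    _ = _ := by ring

def blockRow (E : ι → Matrix α β ℝ) : Matrix α (ι × β) ℝ :=
  Matrix.of fun p jt => E jt.1 p jt.2

omit [Fintype α] in
lemma blockRow_mul_transpose (E F : ι → Matrix α β ℝ) :
    blockRow E * (blockRow F)ᵀ = ∑ j, E j * (F j)ᵀ := by
  ext p q
  simp [blockRow, mul_apply, Matrix.sum_apply, Fintype.sum_prod_type]

lemma opNorm_sum_mul_transpose_le [DecidableEq α] [DecidableEq β] [DecidableEq ι]
    (E F : ι → Matrix α β ℝ) :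
    opNorm (∑ j, E j * (F j)ᵀ)
      ≤ √(opNorm (∑ j, E j * (E j)ᵀ) * opNorm (∑ j, F j * (F j)ᵀ)) := by
  rw [← blockRow_mul_transpose, ← blockRow_mul_transpose, ← blockRow_mul_transpose,
    opNorm_mul_transpose_self, opNorm_mul_transpose_self, ← mul_pow,
    Real.sqrt_sq (mul_nonneg (opNorm_nonneg _) (opNorm_nonneg _)), ← opNorm_transpose (blockRow F)]
  exact l2_opNorm_mul _ _

end L2OpNorm

section Weighted

variable {α β ι : Type*} [Fintype α] [DecidableEq α]

omit [DecidableEq α] in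
lemma wsq_nonneg {w : α → ℝ} (hw : ∀ i, 0 ≤ w i) (u : α → ℝ) : 0 ≤ wsq w u :=
  Finset.sum_nonneg fun i _ => div_nonneg (sq_nonneg _) (hw i)

omit [DecidableEq α] in
lemma sq_div_sqrt {w : α → ℝ} (hw : ∀ i, 0 ≤ w i) (u : α → ℝ) :
    SSGD.sq (fun i => u i / √(w i)) = wsq w u := by
  simp only [SSGD.sq, wsq, div_pow, Real.sq_sqrt (hw _)]

lemma abs_dotProduct_mulVec_le_wsq {w : α → ℝ} (hw : ∀ i, 0 < w i) (M : Matrix α α ℝ)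
    (u y : α → ℝ) :
    |u ⬝ᵥ (M *ᵥ y)| ≤ opNorm (diagonal (fun i => √(w i)) * M * diagonal (fun i => √(w i)))
      * (√(wsq w u) * √(wsq w y)) := by
  have hsqrt : ∀ i, √(w i) ≠ 0 := fun i => (Real.sqrt_pos.2 (hw i)).ne'
  have hrescale : ∀ z : α → ℝ, diagonal (fun i => √(w i)) *ᵥ (fun i => z i / √(w i)) = z := by
    intro z; ext i; simp [mulVec_diagonal, mul_div_cancel₀ _ (hsqrt i)]
  have hconj : u ⬝ᵥ (M *ᵥ y) = (fun i => u i / √(w i)) ⬝ᵥ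
      ((diagonal (fun i => √(w i)) * M * diagonal (fun i => √(w i))) *ᵥ fun i => y i / √(w i)) := by
    have hrescale' : (fun i => u i / √(w i)) ᵥ* diagonal (fun i => √(w i)) = u := by
      ext i; simp [vecMul_diagonal, div_mul_cancel₀ _ (hsqrt i)]
    rw [← mulVec_mulVec, hrescale, ← mulVec_mulVec, dotProduct_mulVec _ (diagonal _), hrescale']
  rw [hconj, ← sq_div_sqrt (fun i => (hw i).le), ← sq_div_sqrt (fun i => (hw i).le)]
  exact abs_dotProduct_mulVec_le _ _ _

variable [Fintype β] [Fintype ι]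

lemma sum_diagonal_conj_mul_transpose (d : α → ℝ) (U V : ι → Matrix α α ℝ)
    (hV : ∀ j, (V j)ᵀ = V j) (B : Matrix α β ℝ) :
    ∑ j, (diagonal d * U j * B) * (diagonal d * V j * B)ᵀ
      = diagonal d * (∑ j, U j * (B * Bᵀ) * V j) * diagonal d := by
  simp only [transpose_mul, diagonal_transpose, hV, Finset.mul_sum, Finset.sum_mul,
    Matrix.mul_assoc]

end Weighted

section Batches

lemma idx_div (hb : 0 < b) (i : Fin m) (j : Fin b) : (idx b m i j).1 / b = i.1 := by
  simp [idx, Nat.mul_add_div hb, Nat.div_eq_of_lt j.2]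

lemma mem_batch_iff (hb : 0 < b) {j p : ℕ} : b * j ≤ p ∧ p < b * (j + 1) ↔ p / b = j := by
  rw [Nat.mul_comm b j, Nat.mul_comm b (j + 1), ← Nat.le_div_iff_mul_le hb,
    ← Nat.div_lt_iff_lt_mul hb]
  omega

lemma sum_idx {M : Type*} [AddCommMonoid M] (F : Fin (b * m) → M) :
    ∑ i : Fin m, ∑ j : Fin b, F (idx b m i j) = ∑ p, F p := by
  rw [← Fintype.sum_prod_type']
  exact Fintype.sum_equiv (finProdFinEquiv.trans (finCongr (Nat.mul_comm m b))) _ _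
    fun x => congrArg F (Fin.ext (by simp [idx, finProdFinEquiv, Nat.add_comm]))

lemma sum_idx_eq_sum_ite {M : Type*} [AddCommMonoid M] (hb : 0 < b) (i : Fin m)
    (F : Fin (b * m) → M) :
    ∑ j : Fin b, F (idx b m i j) = ∑ q, if q.1 / b = i.1 then F q else 0 := by
  rw [← sum_idx]
  simp only [idx_div hb, Fin.val_inj]
  rw [Fintype.sum_eq_single i fun i' hi' => by simp [hi']]
  simp

lemma sub_eq_sum_of_batch_update (hb : 0 < b) {X : ℕ → Fin d → ℝ} {c : ℝ}
    {F : Fin (b * m) → Fin d → ℝ}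
    (hupd : ∀ i : Fin m, ∀ t, X (i.1 + 1) t = X i.1 t - c * ∑ j : Fin b, F (idx b m i j) t)
    (i : Fin m) (t : Fin d) :
    X m t - X i.1 t = -c * ∑ q : Fin (b * m), if i.1 ≤ q.1 / b then F q t else 0 := by
  have hstep : ∀ k ∈ Finset.Ico i.1 m, X (k + 1) t - X k t
      = -c * ∑ q : Fin (b * m), if q.1 / b = k then F q t else 0 := by
    intro k hk
    have hkm : k < m := (Finset.mem_Ico.1 hk).2
    rw [hupd ⟨k, hkm⟩ t, sum_idx_eq_sum_ite hb ⟨k, hkm⟩ (fun q => F q t)]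
    ring
  rw [← Finset.sum_Ico_sub (fun k => X k t) i.2.le, Finset.sum_congr rfl hstep,
    ← Finset.mul_sum, Finset.sum_comm]
  congr 1
  refine Finset.sum_congr rfl fun q _ => ?_
  simp [Finset.sum_ite_eq, Nat.div_lt_of_lt_mul q.2]

noncomputable def blockUpper (b m : ℕ) (P : Matrix (Fin (b * m)) (Fin (b * m)) ℝ) :
    Matrix (Fin (b * m)) (Fin (b * m)) ℝ :=
  ∑ j : Fin m, Iblk (b * m) b j * P * Iup (b * m) (b * j)

lemma blockUpper_apply (hb : 0 < b) (P : Matrix (Fin (b * m)) (Fin (b * m)) ℝ)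
    (p q : Fin (b * m)) :
    blockUpper b m P p q = if p.1 / b ≤ q.1 / b then P p q else 0 := by
  simp only [blockUpper, Matrix.sum_apply, Iblk, Iup, mul_diagonal, diagonal_mul,
    mem_batch_iff hb]
  rw [Fintype.sum_eq_single ⟨p.1 / b, Nat.div_lt_of_lt_mul p.2⟩ fun j hj => by
    simp [Ne.symm (Fin.val_ne_of_ne hj)]]
  simp [Nat.le_div_iff_mul_le hb, Nat.mul_comm]

lemma sum_batches_mul_dot_sub_eq (hb : 0 < b) {A : Matrix (Fin (b * m)) (Fin d) ℝ}
    {π : Equiv.Perm (Fin (b * m))} {η : ℝ} {X : ℕ → Fin d → ℝ} {Y : Fin (b * m) → ℝ}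
    (hupd : ∀ i : Fin m, ∀ t, X (i.1 + 1) t
      = X i.1 t - (η / (b : ℝ)) * ∑ j : Fin b, Y (idx b m i j) * A (π (idx b m i j)) t)
    (u : Fin (b * m) → ℝ) :
    ∑ i : Fin m, ∑ j : Fin b, u (idx b m i j) * dot (A (π (idx b m i j))) (fun t => X m t - X i.1 t)
      = -(η / b) * (u ⬝ᵥ (blockUpper b m (permMat A π * (permMat A π)ᵀ) *ᵥ Y)) := by
  have hdot : ∀ (i : Fin m) (p : Fin (b * m)), dot (A (π p)) (fun t => X m t - X i.1 t)
      = -(η / b) * ∑ q, if i.1 ≤ q.1 / b then (permMat A π * (permMat A π)ᵀ) p q * Y q else 0 := by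
    intro i p
    simp only [dot, sub_eq_sum_of_batch_update (F := fun q t => Y q * A (π q) t) hb hupd i,
      Finset.mul_sum, mul_ite, mul_zero]
    rw [Finset.sum_comm]
    refine Finset.sum_congr rfl fun q _ => ?_
    split_ifs
    · simp only [mul_apply, permMat, submatrix_apply, transpose_apply, id, Finset.mul_sum,
        Finset.sum_mul]
      exact Finset.sum_congr rfl fun t _ => by ring
    · simp
  calc _ = ∑ p, u p * (-(η / b) * ∑ q,
          if p.1 / b ≤ q.1 / b then (permMat A π * (permMat A π)ᵀ) p q * Y q else 0) := by
        rw [← sum_idx]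
        simp only [hdot, idx_div hb]
    _ = _ := by
      simp only [dotProduct, mulVec, blockUpper_apply hb, ite_mul, zero_mul, Finset.mul_sum]
      exact Finset.sum_congr rfl fun p _ => Finset.sum_congr rfl fun q _ => by split_ifs <;> ring

lemma opNorm_conj_blockUpper_le (hb : 0 < b) (hm : 0 < m) (A : Matrix (Fin (b * m)) (Fin d) ℝ)
    (w : Fin (b * m) → ℝ) (π : Equiv.Perm (Fin (b * m))) :
    opNorm (diagonal (fun i => √(w (π i))) * blockUpper b m (permMat A π * (permMat A π)ᵀ)
        * diagonal (fun i => √(w (π i))))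
      ≤ ((b * m : ℕ) : ℝ) * √(hatC A w π * tilC A w π) := by
  have hIblk : ∀ j : Fin m, (Iblk (b * m) b j)ᵀ = Iblk (b * m) b j := fun _ => diagonal_transpose _
  have hIup : ∀ j : Fin m, (Iup (b * m) (b * j))ᵀ = Iup (b * m) (b * j) :=
    fun _ => diagonal_transpose _
  have key := opNorm_sum_mul_transpose_le
    (fun j : Fin m => diagonal (fun i => √(w (π i))) * Iblk (b * m) b j * permMat A π)
    (fun j : Fin m => diagonal (fun i => √(w (π i))) * Iup (b * m) (b * j) * permMat A π)
  rw [sum_diagonal_conj_mul_transpose _ _ _ hIup, sum_diagonal_conj_mul_transpose _ _ _ hIblk,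
    sum_diagonal_conj_mul_transpose _ _ _ hIup, ← blockUpper] at key
  have hb' : (b : ℝ) ≠ 0 := by positivity
  have hm' : (m : ℝ) ≠ 0 := by positivity
  have htil : opNorm (diagonal (fun i => √(w (π i)))
      * (∑ j : Fin m, Iblk (b * m) b j * (permMat A π * (permMat A π)ᵀ) * Iblk (b * m) b j)
      * diagonal (fun i => √(w (π i)))) = b * tilC A w π := by
    rw [tilC]; field_simp
  have hhat : opNorm (diagonal (fun i => √(w (π i)))
      * (∑ j : Fin m, Iup (b * m) (b * j) * (permMat A π * (permMat A π)ᵀ) * Iup (b * m) (b * j))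
      * diagonal (fun i => √(w (π i)))) = m * ((b * m : ℕ) : ℝ) * hatC A w π := by
    rw [hatC]; field_simp
  refine key.trans (le_of_eq ?_)
  rw [htil, hhat, show (b : ℝ) * tilC A w π * (m * ((b * m : ℕ) : ℝ) * hatC A w π)
      = ((b * m : ℕ) : ℝ) ^ 2 * (hatC A w π * tilC A w π) by push_cast; ring,
    Real.sqrt_mul (sq_nonneg _), Real.sqrt_sq (Nat.cast_nonneg _)]

end Batches

theorem stmt7_general
    (b m d : ℕ) (hb : 0 < b) (hm : 0 < m)
    (A : Matrix (Fin (b * m)) (Fin d) ℝ)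
    (G : Fin (b * m) → ℝ)
    (hG : ∀ i, 0 < G i)
    (η : ℝ)
    (π : Equiv.Perm (Fin (b * m)))
    (X : ℕ → Fin d → ℝ) (Y : Fin (b * m) → ℝ)
    (hupd : ∀ i : Fin m, ∀ t, X (i.1 + 1) t
      = X i.1 t - (η / (b : ℝ)) * ∑ j : Fin b, Y (idx b m i j) * A (π (idx b m i j)) t)
    (v : Fin (b * m) → ℝ) :
    let n : ℝ := ((b * m : ℕ) : ℝ)
    let c : ℝ := Real.sqrt (hatC A (fun i => (G i) ^ 2) π * tilC A (fun i => (G i) ^ 2) π)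
    (η / n) * ∑ i : Fin m, ∑ j : Fin b,
        (v (π (idx b m i j)) - Y (idx b m i j))
          * dot (A (π (idx b m i j))) (fun t => X m t - X i.1 t)
      ≤ (η ^ 2 * c / (b : ℝ)) * wsq (fun p => (G (π p)) ^ 2) Y
        + (η ^ 2 * c / (4 * (b : ℝ))) * wsq (fun p => (G (π p)) ^ 2)
            (fun p => v (π p) - Y p) := by
  intro n c
  set u := fun p => v (π p) - Y p
  set B := u ⬝ᵥ (blockUpper b m (permMat A π * (permMat A π)ᵀ) *ᵥ Y)
  set Sy := wsq (fun p => G (π p) ^ 2) Y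
  set Su := wsq (fun p => G (π p) ^ 2) u
  have hB : |B| ≤ n * c * (√Su * √Sy) :=
    (abs_dotProduct_mulVec_le_wsq (fun p => pow_pos (hG (π p)) 2) _ u Y).trans
      (mul_le_mul_of_nonneg_right (opNorm_conj_blockUpper_le hb hm A (fun i => G i ^ 2) π)
        (by positivity))
  have hYoung : √Su * √Sy ≤ Sy + Su / 4 := by
    nlinarith [Real.sq_sqrt (wsq_nonneg (fun p => sq_nonneg (G (π p))) u),
      Real.sq_sqrt (wsq_nonneg (fun p => sq_nonneg (G (π p))) Y),
      sq_nonneg (√Sy - √Su / 2)]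
  have hn : 0 < n := by positivity
  have hb' : (0 : ℝ) < b := by positivity
  rw [sum_batches_mul_dot_sub_eq hb hupd u]
  calc η / n * (-(η / b) * B) ≤ η ^ 2 / (n * b) * |B| := by
        rw [show η / n * (-(η / b) * B) = η ^ 2 / (n * b) * -B by ring]
        gcongr
        exact neg_le_abs B
    _ ≤ η ^ 2 / (n * b) * (n * c * (Sy + Su / 4)) := by
        gcongr
        exact hB.trans (by gcongr)
    _ = _ := by field_simp

/-- **Lemma B.2**: bound on the second inner-product term `𝒯₂` for convex Lipschitz
losses, in terms of the permutation-dependent constants `Ĝ_π, G̃_π`. -/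
theorem stmt7
    (b m d : ℕ) (hb : 0 < b) (hm : 0 < m)
    (A : Matrix (Fin (b * m)) (Fin d) ℝ)
    (ℓ : Fin (b * m) → ℝ → ℝ) (G : Fin (b * m) → ℝ)
    (hG : ∀ i, 0 < G i)
    (hconv : ∀ i, ConvexOn ℝ Set.univ (ℓ i))
    (hLip : ∀ i s t, |ℓ i s - ℓ i t| ≤ G i * |s - t|)
    (η : ℝ) (hη : 0 < η)
    (π : Equiv.Perm (Fin (b * m)))
    (X : ℕ → Fin d → ℝ) (Y : Fin (b * m) → ℝ)
    (hY : ∀ p : Fin (b * m), IsSubgrad (ℓ (π p)) (dot (A (π p)) (X (p.1 / b))) (Y p))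
    (hupd : ∀ i : Fin m, ∀ t, X (i.1 + 1) t
      = X i.1 t - (η / (b : ℝ)) * ∑ j : Fin b, Y (idx b m i j) * A (π (idx b m i j)) t)
    (v : Fin (b * m) → ℝ) :
    let n : ℝ := ((b * m : ℕ) : ℝ)
    let c : ℝ := Real.sqrt (hatC A (fun i => (G i) ^ 2) π * tilC A (fun i => (G i) ^ 2) π)
    (η / n) * ∑ i : Fin m, ∑ j : Fin b,
        (v (π (idx b m i j)) - Y (idx b m i j))
          * dot (A (π (idx b m i j))) (fun t => X m t - X i.1 t)
      ≤ (η ^ 2 * c / (b : ℝ)) * wsq (fun p => (G (π p)) ^ 2) Y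
        + (η ^ 2 * c / (4 * (b : ℝ))) * wsq (fun p => (G (π p)) ^ 2)
            (fun p => v (π p) - Y p) :=
  stmt7_general b m d hb hm A G hG η π X Y hupd v
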